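/- arXiv:0804.3739 — 3 statements merged into one kernel-verified Lean document; each statement's English description precedes it below -/
import Mathlib

section
/- Let r be a polynomial in the variable t with coefficients in 𝒫ₙ and let j ≥ 1 be an integer. Then for every t ∈ U and every u ∈ ℂᵈ, the derivative with respect to t of the function t ↦ (t²−1)ʲ · Y(t)⁻¹ · (r(t))(Y(t)u) exists and equals (t²−1)^{j−1} · Y(t)⁻¹ · ((𝒜ⱼ r)(t))(Y(t)u). -/
open Matrix

lemma pi_hasDerivAt {ι : Type*} [Fintype ι] {E : Type*} [NormedAddCommGroup E]
    [NormedSpace ℝ E] {f : ℝ → ι → E} {f' : ι → E} {x : ℝ}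
    (h : ∀ i, HasDerivAt (fun s => f s i) (f' i) x) : HasDerivAt f f' x := by
  have H : HasFDerivAt f
      (ContinuousLinearMap.pi fun i => (1 : ℝ →L[ℝ] ℝ).smulRight (f' i)) x := by
    apply hasFDerivAt_pi''
    intro i
    rw [ContinuousLinearMap.proj_pi]
    exact (h i).hasFDerivAt
  simpa using H.hasDerivAt

lemma differentiable_mvpoly_eval {d : ℕ} (p : MvPolynomial (Fin d) ℂ) :
    Differentiable ℂ (fun w : Fin d → ℂ => MvPolynomial.eval w p) := by
  intro w
  have h : AnalyticAt ℂ (fun x : Fin d → ℂ => (MvPolynomial.aeval x) p) w :=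
    AnalyticAt.aeval_mvPolynomial
      (fun i => (ContinuousLinearMap.proj i : (Fin d → ℂ) →L[ℂ] ℂ).analyticAt w) p
  have he : ∀ x : Fin d → ℂ, (MvPolynomial.aeval x) p = MvPolynomial.eval x p := fun x => by
    rw [← MvPolynomial.coe_aeval_eq_eval]; rfl
  have := h.differentiableAt
  simpa [he] using this

lemma det_diffAt {d : ℕ} {M : ℝ → Matrix (Fin d) (Fin d) ℂ} {t : ℝ}
    (h : ∀ i j, DifferentiableAt ℝ (fun s => M s i j) t) :
    DifferentiableAt ℝ (fun s => (M s).det) t := by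
  have he : (fun s => (M s).det)
      = fun s => ∑ σ : Equiv.Perm (Fin d), ((Equiv.Perm.sign σ : ℤ) : ℂ) * ∏ i, M s (σ i) i :=
    funext fun s => Matrix.det_apply' (M s)
  rw [he]
  exact DifferentiableAt.fun_sum fun σ _ =>
    ((HasDerivAt.fun_finsetProd fun i _ => (h (σ i) i).hasDerivAt).differentiableAt).const_mul _


/-- The space `𝒫ₙ` of maps `q : ℂᵈ → ℂᵈ` each of whose components is (the evaluation of)
a homogeneous polynomial of degree `n` in `w₁, …, w_d`. -/
def PnSet (d n : ℕ) : Set ((Fin d → ℂ) → (Fin d → ℂ)) :=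
  {q | ∃ Q : Fin d → MvPolynomial (Fin d) ℂ,
    (∀ i, (Q i).IsHomogeneous n) ∧ ∀ w i, q w i = MvPolynomial.eval w (Q i)}

lemma PnSet.differentiable {d n : ℕ} {q} (hq : q ∈ PnSet d n) : Differentiable ℂ q := by
  obtain ⟨Q, -, hQ⟩ := hq
  have hfe : q = fun w i => MvPolynomial.eval w (Q i) :=
    funext fun w => funext fun i => hQ w i
  rw [hfe]
  intro x
  exact differentiableAt_pi.mpr fun i => (differentiable_mvpoly_eval (Q i)).differentiableAt


/-- The operator `q ↦ (w ↦ (dq)_w(M w) − M q(w))` built from a `d × d` matrix `M`. -/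
noncomputable def Dop {d : ℕ} (M : Matrix (Fin d) (Fin d) ℂ)
    (q : (Fin d → ℂ) → (Fin d → ℂ)) (w : Fin d → ℂ) : Fin d → ℂ :=
  fderiv ℂ q w (M.mulVec w) - M.mulVec (q w)

/-- The value at `s ∈ ℝ`, `w ∈ ℂᵈ` of the polynomial `r` in `t` with coefficients
`c 0, …, c N ∈ 𝒫ₙ`: `r(s)(w) = Σ_{i=0}^{N} sⁱ · (c i)(w)`. -/
noncomputable def rval {d : ℕ} (N : ℕ) (c : ℕ → (Fin d → ℂ) → (Fin d → ℂ))
    (s : ℝ) (w : Fin d → ℂ) : Fin d → ℂ :=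
  ∑ i ∈ Finset.range (N + 1), ((s : ℂ) ^ i) • c i w

/-- The value of the (formal) derivative `r′`: `r′(s)(w) = Σ_{i=0}^{N} i·s^{i−1} · (c i)(w)`. -/
noncomputable def rderval {d : ℕ} (N : ℕ) (c : ℕ → (Fin d → ℂ) → (Fin d → ℂ))
    (s : ℝ) (w : Fin d → ℂ) : Fin d → ℂ :=
  ∑ i ∈ Finset.range (N + 1), ((i : ℂ) * (s : ℂ) ^ (i - 1)) • c i w

/-- The value of `𝒜ⱼ r` at `(s, w)`, where
`(𝒜ⱼ r)(x) = x·(2j·r(x) + D₁ r(x)) + D₂ r(x) + (x²−1)·r′(x)` and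
`(Dᵢ q)(w) = (dq)_w(Mᵢ w) − Mᵢ q(w)` with `M₁ = A+B`, `M₂ = A−B`. -/
noncomputable def Aval {d : ℕ} (A B : Matrix (Fin d) (Fin d) ℂ)
    (N : ℕ) (c : ℕ → (Fin d → ℂ) → (Fin d → ℂ)) (j : ℕ)
    (s : ℝ) (w : Fin d → ℂ) : Fin d → ℂ :=
  (s : ℂ) • ((2 * (j : ℂ)) • rval N c s w + Dop (A + B) (rval N c s) w) +
    Dop (A - B) (rval N c s) w + (((s : ℂ) ^ 2 - 1)) • rderval N c s w

/-- Let `r` be a polynomial in `t` with coefficients in `𝒫ₙ` and let `j ≥ 1`. Then for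
every `t ∈ U` and every `u ∈ ℂᵈ`, the derivative in `t` of
`t ↦ (t²−1)ʲ · Y(t)⁻¹ · r(t)(Y(t)u)` exists and equals
`(t²−1)^{j−1} · Y(t)⁻¹ · (𝒜ⱼ r)(t)(Y(t)u)`. Here `Y : U → GL_d(ℂ)` is infinitely
differentiable on the open set `U ∌ ±1` and solves `Y′ = ((x−1)⁻¹A + (x+1)⁻¹B)·Y` on `U`. -/
theorem stmt_0 (d n : ℕ) (hd : 1 ≤ d) (hn : 1 ≤ n)
    (A B : Matrix (Fin d) (Fin d) ℂ)
    (U : Set ℝ) (hU : IsOpen U) (h1 : (1 : ℝ) ∉ U) (h2 : (-1 : ℝ) ∉ U)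
    (Y : ℝ → Matrix (Fin d) (Fin d) ℂ)
    (hYsmooth : ∀ i j : Fin d, ContDiffOn ℝ (⊤ : ℕ∞) (fun x => Y x i j) U)
    (hYinv : ∀ x ∈ U, IsUnit (Y x))
    (hYode : ∀ x ∈ U, ∀ i j : Fin d,
      HasDerivAt (fun t : ℝ => Y t i j)
        ((((((x : ℂ) - 1)⁻¹) • A + (((x : ℂ) + 1)⁻¹) • B) * Y x) i j) x)
    (N : ℕ) (c : ℕ → (Fin d → ℂ) → (Fin d → ℂ)) (hc : ∀ i, c i ∈ PnSet d n)
    (j : ℕ) (hj : 1 ≤ j) (t : ℝ) (ht : t ∈ U) (u : Fin d → ℂ) :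
    HasDerivAt
      (fun s : ℝ => (((s : ℂ) ^ 2 - 1) ^ j) •
        ((Y s)⁻¹).mulVec (rval N c s ((Y s).mulVec u)))
      ((((t : ℂ) ^ 2 - 1) ^ (j - 1)) •
        ((Y t)⁻¹).mulVec (Aval A B N c j t ((Y t).mulVec u))) t := by
  classical
  have ht1 : (t : ℂ) - 1 ≠ 0 := by
    rw [sub_ne_zero]
    exact_mod_cast fun h : t = 1 => h1 (h ▸ ht)
  have ht2 : (t : ℂ) + 1 ≠ 0 := by
    intro h
    have : (t : ℂ) = -1 := by linear_combination h
    have : t = -1 := by exact_mod_cast this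
    exact h2 (this ▸ ht)
  set C : Matrix (Fin d) (Fin d) ℂ :=
    (((t : ℂ) - 1)⁻¹) • A + (((t : ℂ) + 1)⁻¹) • B with hCdef
  have hYd : ∀ i j, HasDerivAt (fun s => Y s i j) ((C * Y t) i j) t := hYode t ht
  have hdet : IsUnit (Y t).det := (Matrix.isUnit_iff_isUnit_det _).mp (hYinv t ht)
  -- differentiability of the inverse entries
  have hZd : ∀ i j, DifferentiableAt ℝ (fun s => (Y s)⁻¹ i j) t := by
    intro i j
    have hdetd : DifferentiableAt ℝ (fun s => (Y s).det) t :=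
      det_diffAt fun i j => (hYd i j).differentiableAt
    have hadj : DifferentiableAt ℝ (fun s => (Y s).adjugate i j) t := by
      have he : (fun s => (Y s).adjugate i j)
          = fun s => ((Y s).updateRow j (Pi.single i 1)).det :=
        funext fun s => Matrix.adjugate_apply _ i j
      rw [he]
      apply det_diffAt
      intro k l
      simp only [Matrix.updateRow_apply]
      split_ifs with hk
      · exact differentiableAt_const _
      · exact (hYd k l).differentiableAt
    have he : (fun s => (Y s)⁻¹ i j) = fun s => ((Y s).det)⁻¹ * (Y s).adjugate i j := by
      funext s
      rw [Matrix.inv_def, Matrix.smul_apply, Ring.inverse_eq_inv, smul_eq_mul]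
    rw [he]
    exact (hdetd.inv hdet.ne_zero).mul hadj
  set W : Matrix (Fin d) (Fin d) ℂ :=
    Matrix.of (fun i j => deriv (fun s => (Y s)⁻¹ i j) t) with hWdef
  have hZd' : ∀ i j, HasDerivAt (fun s => (Y s)⁻¹ i j) (W i j) t := fun i j =>
    (hZd i j).hasDerivAt
  have hYZ : Y t * (Y t)⁻¹ = 1 := Matrix.mul_nonsing_inv _ hdet
  have hW : W = -((Y t)⁻¹ * C) := by
    have key : W * Y t + (Y t)⁻¹ * (C * Y t) = 0 := by
      ext i k
      have hki : HasDerivAt (fun s => ∑ m, (Y s)⁻¹ i m * Y s m k)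
          (∑ m, (W i m * Y t m k + (Y t)⁻¹ i m * (C * Y t) m k)) t :=
        HasDerivAt.fun_sum fun m _ => (hZd' i m).mul (hYd m k)
      have hconst : HasDerivAt (fun s => ∑ m, (Y s)⁻¹ i m * Y s m k) 0 t := by
        have hev : (fun s => ∑ m, (Y s)⁻¹ i m * Y s m k)
            =ᶠ[nhds t] fun _ => (1 : Matrix (Fin d) (Fin d) ℂ) i k := by
          filter_upwards [hU.mem_nhds ht] with s hs
          rw [← Matrix.mul_apply,
            Matrix.nonsing_inv_mul _ ((Matrix.isUnit_iff_isUnit_det _).mp (hYinv s hs))]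
        exact (hasDerivAt_const t _).congr_of_eventuallyEq hev
      have hu := hki.unique hconst
      simpa [Matrix.add_apply, Matrix.mul_apply, Finset.sum_add_distrib] using hu
    calc W = W * (Y t * (Y t)⁻¹) := by rw [hYZ, mul_one]
    _ = (W * Y t) * (Y t)⁻¹ := by rw [mul_assoc]
    _ = (-((Y t)⁻¹ * (C * Y t))) * (Y t)⁻¹ := by
        rw [eq_neg_of_add_eq_zero_left key]
    _ = -((Y t)⁻¹ * C) := by rw [neg_mul, mul_assoc, mul_assoc, hYZ, mul_one]
  -- derivative of the path s ↦ Y s * u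
  have hw : HasDerivAt (fun s => (Y s).mulVec u) ((C * Y t).mulVec u) t := by
    apply pi_hasDerivAt
    intro i
    have h := HasDerivAt.fun_sum (u := Finset.univ)
      fun k _ => (hYd i k).mul_const (u k)
    simpa [Matrix.mulVec, dotProduct] using h
  have hcd : ∀ m, Differentiable ℂ (c m) := fun m => PnSet.differentiable (hc m)
  have hcomp : ∀ m, HasDerivAt (fun s : ℝ => c m ((Y s).mulVec u))
      ((fderiv ℂ (c m) ((Y t).mulVec u)) ((C * Y t).mulVec u)) t := by
    intro m
    have h1 := (((hcd m) ((Y t).mulVec u)).hasFDerivAt).restrictScalars ℝ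
    have h2 := h1.comp_hasDerivAt t hw
    exact h2
  set L : (Fin d → ℂ) →L[ℂ] (Fin d → ℂ) :=
    ∑ m ∈ Finset.range (N + 1), ((t : ℂ) ^ m) • fderiv ℂ (c m) ((Y t).mulVec u) with hL
  have hfd : HasFDerivAt (rval N c t) L ((Y t).mulVec u) := by
    have h : HasFDerivAt (fun w => ∑ m ∈ Finset.range (N + 1), ((t : ℂ) ^ m) • c m w)
        L ((Y t).mulVec u) :=
      HasFDerivAt.fun_sum fun m _ => (((hcd m) ((Y t).mulVec u)).hasFDerivAt).fun_const_smul _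
    exact h
  have hfderiv_eq : fderiv ℂ (rval N c t) ((Y t).mulVec u) = L := hfd.fderiv
  -- derivative of s ↦ r(s)(Y s u)
  have hG : HasDerivAt (fun s => rval N c s ((Y s).mulVec u))
      (rderval N c t ((Y t).mulVec u) + L ((C * Y t).mulVec u)) t := by
    have hterm : ∀ m ∈ Finset.range (N + 1),
        HasDerivAt (fun s : ℝ => ((s : ℂ) ^ m) • c m ((Y s).mulVec u))
          (((t : ℂ) ^ m) • ((fderiv ℂ (c m) ((Y t).mulVec u)) ((C * Y t).mulVec u))
            + ((m : ℂ) * (t : ℂ) ^ (m - 1)) • c m ((Y t).mulVec u)) t := by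
      intro m _
      have hp : HasDerivAt (fun s : ℝ => (s : ℂ) ^ m) ((m : ℂ) * (t : ℂ) ^ (m - 1)) t :=
        (hasDerivAt_pow m ((t : ℂ))).comp_ofReal
      exact hp.smul (hcomp m)
    have hs := HasDerivAt.fun_sum hterm
    have heq : (∑ m ∈ Finset.range (N + 1),
        (((t : ℂ) ^ m) • ((fderiv ℂ (c m) ((Y t).mulVec u)) ((C * Y t).mulVec u))
          + ((m : ℂ) * (t : ℂ) ^ (m - 1)) • c m ((Y t).mulVec u)))
        = rderval N c t ((Y t).mulVec u) + L ((C * Y t).mulVec u) := by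
      rw [Finset.sum_add_distrib, add_comm]
      congr 1
      rw [hL]
      simp [ContinuousLinearMap.sum_apply, ContinuousLinearMap.smul_apply]
    rw [heq] at hs
    exact hs
  have hGk : ∀ k, HasDerivAt (fun s => rval N c s ((Y s).mulVec u) k)
      ((rderval N c t ((Y t).mulVec u) + L ((C * Y t).mulVec u)) k) t := by
    intro k
    have h := (ContinuousLinearMap.proj (R := ℝ) (φ := fun _ : Fin d => ℂ)
      k).hasFDerivAt.comp_hasDerivAt t hG
    simpa [Function.comp_def] using h
  have hφ : HasDerivAt (fun s : ℝ => ((s : ℂ) ^ 2 - 1) ^ j)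
      ((j : ℂ) * ((t : ℂ) ^ 2 - 1) ^ (j - 1) * (2 * (t : ℂ))) t := by
    have hin : HasDerivAt (fun z : ℂ => z ^ 2 - 1) (2 * (t : ℂ)) ((t : ℂ)) := by
      simpa using (hasDerivAt_pow 2 ((t : ℂ))).sub_const 1
    have hj2 : HasDerivAt (fun z : ℂ => (z ^ 2 - 1) ^ j)
        ((j : ℂ) * ((t : ℂ) ^ 2 - 1) ^ (j - 1) * (2 * (t : ℂ))) ((t : ℂ)) := hin.pow j
    exact hj2.comp_ofReal
  -- main assembly
  set G0 : Fin d → ℂ := rval N c t ((Y t).mulVec u) with hG0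
  set Gd : Fin d → ℂ := rderval N c t ((Y t).mulVec u) + L ((C * Y t).mulVec u) with hGd
  have hmain : HasDerivAt
      (fun s : ℝ => (((s : ℂ) ^ 2 - 1) ^ j) •
        ((Y s)⁻¹).mulVec (rval N c s ((Y s).mulVec u)))
      (((j : ℂ) * ((t : ℂ) ^ 2 - 1) ^ (j - 1) * (2 * (t : ℂ))) • ((Y t)⁻¹).mulVec G0
        + (((t : ℂ) ^ 2 - 1) ^ j) • (W.mulVec G0 + ((Y t)⁻¹).mulVec Gd)) t := by
    apply pi_hasDerivAt
    intro i
    have hvi : HasDerivAt (fun s => ∑ k, (Y s)⁻¹ i k * rval N c s ((Y s).mulVec u) k)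
        (∑ k, (W i k * G0 k + (Y t)⁻¹ i k * Gd k)) t :=
      HasDerivAt.fun_sum fun k _ => (hZd' i k).mul (hGk k)
    have h := hφ.fun_mul hvi
    convert h using 1
    · rfl
    · rfl
    simp only [Pi.add_apply, Pi.smul_apply, smul_eq_mul, Matrix.mulVec, dotProduct,
      Finset.sum_add_distrib, Finset.mul_sum, mul_add]
    rfl
  -- identify the derivative value
  have hCm : ∀ x : Fin d → ℂ, (((t : ℂ) ^ 2 - 1)) • (C.mulVec x)
      = (t : ℂ) • ((A + B).mulVec x) + (A - B).mulVec x := by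
    intro x
    have hC : (((t : ℂ) ^ 2 - 1)) • C = (t : ℂ) • (A + B) + (A - B) := by
      ext i k
      simp only [hCdef, Matrix.smul_apply, Matrix.add_apply, Matrix.sub_apply,
        smul_eq_mul]
      field_simp
      ring
    calc (((t : ℂ) ^ 2 - 1)) • (C.mulVec x) = ((((t : ℂ) ^ 2 - 1)) • C).mulVec x :=
          (smul_mulVec _ _ _).symm
    _ = ((t : ℂ) • (A + B)).mulVec x + (A - B).mulVec x := by
          rw [hC, Matrix.add_mulVec]
    _ = (t : ℂ) • ((A + B).mulVec x) + (A - B).mulVec x := by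
          rw [smul_mulVec]
  have hX : Aval A B N c j t ((Y t).mulVec u)
      = (2 * (j : ℂ) * (t : ℂ)) • G0 + (((t : ℂ) ^ 2 - 1)) • Gd
        - (((t : ℂ) ^ 2 - 1)) • (C.mulVec G0) := by
    have h1 : (((t : ℂ) ^ 2 - 1)) • (L ((C * Y t).mulVec u))
        = (t : ℂ) • (L ((A + B).mulVec ((Y t).mulVec u)))
          + L ((A - B).mulVec ((Y t).mulVec u)) := by
      rw [← Matrix.mulVec_mulVec, ← _root_.map_smul, hCm ((Y t).mulVec u), map_add, _root_.map_smul]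
    have h2 := hCm G0
    simp only [Aval, Dop, hfderiv_eq, ← hG0]
    conv_rhs => rw [hGd, smul_add, h1, h2]
    module
  have hje : ((t : ℂ) ^ 2 - 1) ^ j = ((t : ℂ) ^ 2 - 1) ^ (j - 1) * ((t : ℂ) ^ 2 - 1) := by
    rw [← pow_succ, Nat.sub_add_cancel hj]
  have heq : ((((t : ℂ) ^ 2 - 1) ^ (j - 1)) •
        ((Y t)⁻¹).mulVec (Aval A B N c j t ((Y t).mulVec u)))
      = (((j : ℂ) * ((t : ℂ) ^ 2 - 1) ^ (j - 1) * (2 * (t : ℂ))) • ((Y t)⁻¹).mulVec G0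
        + (((t : ℂ) ^ 2 - 1) ^ j) • (W.mulVec G0 + ((Y t)⁻¹).mulVec Gd)) := by
    rw [hX, hW, hje, Matrix.neg_mulVec, ← Matrix.mulVec_mulVec,
      Matrix.mulVec_sub, Matrix.mulVec_add, Matrix.mulVec_smul, Matrix.mulVec_smul,
      Matrix.mulVec_smul]
    module
  rw [heq]
  exact hmain
end

section
/- (The multidimensional commutative case, formula (2.13).) Let a₁,…,a_d, b₁,…,b_d be complex numbers, A = diag(a₁,…,a_d), B = diag(b₁,…,b_d), and for x ∈ (1,∞) let Y(x) = diag((x−1)^{a_i}(x+1)^{b_i}) (complex powers of positive reals). Fix a multi-index m ∈ ℕᵈ with |m| = n and j ∈ {1,…,d}, and let q(w) = w^m e_j. Then for every integer k ≥ 0, every x ∈ (1,∞) and every w ∈ ℂᵈ: Y(x) · [ (dᵏ/dtᵏ)|_{t=x} of t ↦ (t²−1)ᵏ · Y(t)⁻¹ · q(Y(t)Y(x)⁻¹ w) ] = [ W(x)⁻¹ · (dᵏ/dxᵏ)((x²−1)ᵏ · W(x)) ] · w^m e_j, where W(x) = (x−1)^{m·a − a_j}·(x+1)^{m·b − b_j};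 that is, the operator P_k(x) is diagonal with entries given by Jacobi-type Rodrigues expressions. -/
open Matrix Filter Topology

lemma cpow_pow_aux {z : ℂ} (hz : z ≠ 0) (c : ℂ) : ∀ m : ℕ, (z ^ c) ^ m = z ^ ((m : ℂ) * c)
  | 0 => by simp
  | (m+1) => by
      rw [pow_succ, cpow_pow_aux hz c m, ← Complex.cpow_add _ _ hz]
      congr 1
      push_cast
      ring

lemma prod_cpow_aux {d : ℕ} {z : ℂ} (hz : z ≠ 0) (c : Fin d → ℂ) (m : Fin d → ℕ)
    (s : Finset (Fin d)) :
    (∏ i ∈ s, (z ^ c i) ^ m i) = z ^ (∑ i ∈ s, (m i : ℂ) * c i) := by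
  induction s using Finset.induction with
  | empty => simp
  | @insert _ _ h ih =>
      rw [Finset.prod_insert h, Finset.sum_insert h, Complex.cpow_add _ _ hz, ih,
        cpow_pow_aux hz]

lemma deriv_smul_const_aux {d : ℕ} (h : ℝ → ℂ) (c : Fin d → ℂ) :
    deriv (fun t => h t • c) = fun t => deriv h t • c := by
  funext t
  by_cases hc : c = 0
  · simp [hc]
  · by_cases hd : DifferentiableAt ℝ h t
    · exact (hd.hasDerivAt.smul_const c).deriv
    · rw [deriv_zero_of_not_differentiableAt hd, zero_smul,
        deriv_zero_of_not_differentiableAt]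
      intro H
      obtain ⟨i, hi⟩ := Function.ne_iff.mp hc
      have hi' : c i ≠ 0 := by simpa using hi
      have Hi : DifferentiableAt ℝ (fun t => h t * c i) t := by
        have := differentiableAt_pi.mp H i
        simpa using this
      have : (fun t => (h t * c i) * (c i)⁻¹) = h := by
        funext s; field_simp [hi']
      exact hd (this ▸ Hi.mul_const (c i)⁻¹)

lemma iteratedDeriv_smul_const_aux {d : ℕ} (h : ℝ → ℂ) (c : Fin d → ℂ) (k : ℕ) :
    iteratedDeriv k (fun t => h t • c) = fun t => iteratedDeriv k h t • c := by
  induction k with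
  | zero => simp [iteratedDeriv_zero]
  | succ k ih =>
      funext t
      rw [iteratedDeriv_succ, ih, deriv_smul_const_aux, iteratedDeriv_succ]


/-- The basis element `b_{m,j}(w) = wᵐ e_j`. -/
noncomputable def bElt {d : ℕ} (m : Fin d → ℕ) (j : Fin d) (w : Fin d → ℂ) : Fin d → ℂ :=
  (∏ i, w i ^ m i) • (Pi.single j 1 : Fin d → ℂ)

/-- The diagonal fundamental matrix `Y(x) = diag((x−1)^{aᵢ}(x+1)^{bᵢ})` of the commutative
case (complex powers of positive reals for `x > 1`). -/
noncomputable def Ydiag {d : ℕ} (a b : Fin d → ℂ) (t : ℝ) : Matrix (Fin d) (Fin d) ℂ :=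
  Matrix.diagonal fun i => ((t - 1 : ℝ) : ℂ) ^ a i * ((t + 1 : ℝ) : ℂ) ^ b i

/-- The scalar weight `W(x) = (x−1)^{m·a − a_j}·(x+1)^{m·b − b_j}`. -/
noncomputable def Wscal {d : ℕ} (a b : Fin d → ℂ) (m : Fin d → ℕ) (j : Fin d) (t : ℝ) : ℂ :=
  ((t - 1 : ℝ) : ℂ) ^ ((∑ i, (m i : ℂ) * a i) - a j) *
    ((t + 1 : ℝ) : ℂ) ^ ((∑ i, (m i : ℂ) * b i) - b j)

/-- (The multidimensional commutative case, formula (2.13).) With `A = diag(a)`,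
`B = diag(b)`, `Y(x) = diag((x−1)^{aᵢ}(x+1)^{bᵢ})`, `q(w) = wᵐ e_j` (`|m| = n`): for every
`k ≥ 0`, `x > 1` and `w ∈ ℂᵈ`,
`Y(x)·(dᵏ/dtᵏ)|_{t=x}[(t²−1)ᵏ Y(t)⁻¹ q(Y(t)Y(x)⁻¹w)] = [W(x)⁻¹ (dᵏ/dxᵏ)((x²−1)ᵏ W(x))]·wᵐ e_j`
with `W(x) = (x−1)^{m·a−a_j}(x+1)^{m·b−b_j}`; i.e. `Pₖ(x)` is diagonal with entries given by
Jacobi-type Rodrigues expressions. -/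
theorem stmt_13 (d n : ℕ) (hd : 1 ≤ d) (hn : 1 ≤ n) (a b : Fin d → ℂ)
    (m : Fin d → ℕ) (hm : (∑ i, m i) = n) (j : Fin d)
    (k : ℕ) (x : ℝ) (hx : 1 < x) (w : Fin d → ℂ) :
    (Ydiag a b x).mulVec
        (iteratedDeriv k
          (fun t : ℝ => (((t : ℂ) ^ 2 - 1) ^ k) •
            ((Ydiag a b t)⁻¹).mulVec
              (bElt m j ((Ydiag a b t).mulVec (((Ydiag a b x)⁻¹).mulVec w)))) x) =
      ((Wscal a b m j x)⁻¹ *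
          iteratedDeriv k (fun t : ℝ => (((t : ℂ) ^ 2 - 1) ^ k) * Wscal a b m j t) x) •
        bElt m j w := by
  classical
  set y : ℝ → Fin d → ℂ := fun t i => ((t - 1 : ℝ) : ℂ) ^ a i * ((t + 1 : ℝ) : ℂ) ^ b i
    with hy
  have hYd : ∀ t : ℝ, Ydiag a b t = Matrix.diagonal (y t) := fun t => rfl
  have hne : ∀ t : ℝ, 1 < t →
      (((t - 1 : ℝ) : ℂ) ≠ 0 ∧ ((t + 1 : ℝ) : ℂ) ≠ 0) := by
    intro t ht
    constructor <;> · simp only [ne_eq, Complex.ofReal_eq_zero]; intro h; linarith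
  have hyne : ∀ t : ℝ, 1 < t → ∀ i, y t i ≠ 0 := by
    intro t ht i
    obtain ⟨h1, h2⟩ := hne t ht
    exact mul_ne_zero (fun h => h1 ((Complex.cpow_eq_zero_iff _ _).mp h).1)
      (fun h => h2 ((Complex.cpow_eq_zero_iff _ _).mp h).1)
  have hinv : ∀ t : ℝ, 1 < t →
      (Ydiag a b t)⁻¹ = Matrix.diagonal (fun i => (y t i)⁻¹) := by
    intro t ht
    rw [hYd]
    refine Matrix.inv_eq_right_inv ?_
    rw [Matrix.diagonal_mul_diagonal]
    convert Matrix.diagonal_one using 2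
    funext i
    exact mul_inv_cancel₀ (hyne t ht i)
  -- the weight as a ratio of products
  have hW : ∀ t : ℝ, 1 < t →
      Wscal a b m j t = (y t j)⁻¹ * ∏ l, (y t l) ^ m l := by
    intro t ht
    obtain ⟨h1, h2⟩ := hne t ht
    have hP : (∏ l, (y t l) ^ m l) =
        ((t - 1 : ℝ) : ℂ) ^ (∑ l, (m l : ℂ) * a l) *
          ((t + 1 : ℝ) : ℂ) ^ (∑ l, (m l : ℂ) * b l) := by
      rw [← prod_cpow_aux h1 a m, ← prod_cpow_aux h2 b m, ← Finset.prod_mul_distrib]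
      exact Finset.prod_congr rfl fun l _ => (mul_pow _ _ _)
    rw [Wscal, hP, Complex.cpow_sub _ _ h1, Complex.cpow_sub _ _ h2, hy]
    field_simp
  set u : Fin d → ℂ := ((Ydiag a b x)⁻¹).mulVec w with hu
  have hEq : (fun t : ℝ => (((t : ℂ) ^ 2 - 1) ^ k) •
        ((Ydiag a b t)⁻¹).mulVec (bElt m j ((Ydiag a b t).mulVec u)))
      =ᶠ[𝓝 x] fun t : ℝ => ((((t : ℂ) ^ 2 - 1) ^ k) * Wscal a b m j t) • bElt m j u := by
    filter_upwards [eventually_gt_nhds hx] with t ht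
    have harg : (Ydiag a b t).mulVec u = fun l => y t l * u l := by
      funext l; rw [hYd, Matrix.mulVec_diagonal]
    have hprod : (∏ l, (y t l * u l) ^ m l) =
        (∏ l, (y t l) ^ m l) * ∏ l, (u l) ^ m l := by
      rw [← Finset.prod_mul_distrib]
      exact Finset.prod_congr rfl fun l _ => mul_pow _ _ _
    have hvec : ((Ydiag a b t)⁻¹).mulVec (bElt m j ((Ydiag a b t).mulVec u)) =
        Wscal a b m j t • bElt m j u := by
      rw [hinv t ht, harg]
      funext i
      simp only [bElt, Pi.smul_apply, smul_eq_mul, Matrix.mulVec_diagonal, Pi.single_apply]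
      by_cases hij : i = j
      · rw [hij, if_pos rfl, hW t ht, hprod]
        ring
      · rw [if_neg hij]
        ring
    rw [hvec, smul_smul]
  rw [Filter.EventuallyEq.iteratedDeriv_eq k hEq, iteratedDeriv_smul_const_aux,
    Matrix.mulVec_smul]
  have hfin : (Ydiag a b x).mulVec (bElt m j u) = (Wscal a b m j x)⁻¹ • bElt m j w := by
    have hu' : ∀ l, u l = (y x l)⁻¹ * w l := by
      intro l
      rw [hu, hinv x hx, Matrix.mulVec_diagonal]
    have hprod : (∏ l, (u l) ^ m l) =
        (∏ l, (y x l) ^ m l)⁻¹ * ∏ l, (w l) ^ m l := by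
      rw [← Finset.prod_inv_distrib, ← Finset.prod_mul_distrib]
      refine Finset.prod_congr rfl fun l _ => ?_
      rw [hu' l, mul_pow, inv_pow]
    have hWx : (Wscal a b m j x)⁻¹ = y x j * (∏ l, (y x l) ^ m l)⁻¹ := by
      rw [hW x hx, mul_inv, inv_inv]
    funext i
    rw [hYd]
    simp only [bElt, Pi.smul_apply, smul_eq_mul, Matrix.mulVec_diagonal, Pi.single_apply]
    by_cases hij : i = j
    · rw [hij, if_pos rfl, hprod, hWx]
      ring
    · rw [if_neg hij]
      ring
  rw [hfin, smul_smul, mul_comm]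
end

section
/- (Scalar quasi-orthogonality.) Let α, β be real numbers with α > −1 and β > −1, let k ≥ 1 be an integer, and let p ∈ ℝ[x] be a polynomial of degree strictly less than k. Then ∫_{−1}^{1} p(x) · [ (dᵏ/dtᵏ)|_{t=x} of t ↦ (1−t)^{k+α}·(1+t)^{k+β} ] dx = 0. -/
open MeasureTheory

section QuasiOrthogonalityAux

open Set Filter Topology Polynomial

lemma rpow_step (c d : ℝ) (q : Polynomial ℝ) {f : ℝ → ℝ}
    (hf : ∀ t ∈ Set.Ioo (-1:ℝ) 1, f t = (1 - t) ^ c * (1 + t) ^ d * q.eval t) :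
    ∃ q' : Polynomial ℝ, ∀ t ∈ Set.Ioo (-1:ℝ) 1,
      HasDerivAt f ((1 - t) ^ (c - 1) * (1 + t) ^ (d - 1) * q'.eval t) t := by
  refine ⟨C (-c) * (X + 1) * q + C d * (C 1 - X) * q
      + (C 1 - X) * (X + 1) * derivative q, fun t ht => ?_⟩
  have h1 : (0:ℝ) < 1 - t := by linarith [ht.2]
  have h2 : (0:ℝ) < 1 + t := by linarith [ht.1]
  have hu : HasDerivAt (fun x : ℝ => (1 - x) ^ c) (c * (1 - t) ^ (c - 1) * (-1)) t :=
    (Real.hasDerivAt_rpow_const (x := 1 - t) (p := c) (Or.inl h1.ne')).comp t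
      ((hasDerivAt_id t).const_sub 1)
  have hv : HasDerivAt (fun x : ℝ => (1 + x) ^ d) (d * (1 + t) ^ (d - 1) * 1) t :=
    (Real.hasDerivAt_rpow_const (x := 1 + t) (p := d) (Or.inl h2.ne')).comp t
      ((hasDerivAt_id t).const_add 1)
  have H := (hu.mul hv).mul (q.hasDerivAt t)
  have heq : f =ᶠ[nhds t] fun x => (1 - x) ^ c * (1 + x) ^ d * q.eval x :=
    eventuallyEq_of_mem (isOpen_Ioo.mem_nhds ht) hf
  refine HasDerivAt.congr_of_eventuallyEq ?_ heq
  convert H using 1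
  · rfl
  · rfl
  have e1 : (1 - t) ^ c = (1 - t) ^ (c - 1) * (1 - t) := by
    rw [← Real.rpow_add_one h1.ne' (c - 1)]; ring_nf
  have e2 : (1 + t) ^ d = (1 + t) ^ (d - 1) * (1 + t) := by
    rw [← Real.rpow_add_one h2.ne' (d - 1)]; ring_nf
  simp only [eval_add, eval_mul, eval_C, eval_X, eval_one, eval_sub, e1, e2, Pi.mul_apply]
  ring

lemma iter_formula (α β : ℝ) (k : ℕ) (j : ℕ) :
    ∃ q : Polynomial ℝ, ∀ t ∈ Set.Ioo (-1:ℝ) 1,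
      iteratedDeriv j (fun t : ℝ => (1 - t) ^ ((k:ℝ) + α) * (1 + t) ^ ((k:ℝ) + β)) t
        = (1 - t) ^ ((k:ℝ) + α - j) * (1 + t) ^ ((k:ℝ) + β - j) * q.eval t := by
  induction j with
  | zero => exact ⟨1, fun t ht => by simp [iteratedDeriv_zero]⟩
  | succ j ih =>
    obtain ⟨q, hq⟩ := ih
    obtain ⟨q', hq'⟩ := rpow_step _ _ q hq
    refine ⟨q', fun t ht => ?_⟩
    have ec : (k:ℝ) + α - (j+1 : ℕ) = ((k:ℝ) + α - j) - 1 := by push_cast; ring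
    have ed : (k:ℝ) + β - (j+1 : ℕ) = ((k:ℝ) + β - j) - 1 := by push_cast; ring
    rw [iteratedDeriv_succ, ec, ed, (hq' t ht).deriv]

lemma tendsto_zero_boundary {c d : ℝ} (hc : 0 < c) (hd : 0 < d) (q : Polynomial ℝ) {f : ℝ → ℝ}
    (hf : ∀ t ∈ Set.Ioo (-1:ℝ) 1, f t = (1 - t) ^ c * (1 + t) ^ d * q.eval t) :
    Tendsto f (nhdsWithin 1 (Set.Iio 1)) (nhds 0)
      ∧ Tendsto f (nhdsWithin (-1) (Set.Ioi (-1))) (nhds 0) := by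
  have hgc : Continuous fun t : ℝ => (1 - t) ^ c * (1 + t) ^ d * q.eval t := by
    have c1 : Continuous fun t : ℝ => (1 - t) ^ c :=
      (Real.continuous_rpow_const hc.le).comp (continuous_const.sub continuous_id)
    have c2 : Continuous fun t : ℝ => (1 + t) ^ d :=
      (Real.continuous_rpow_const hd.le).comp (continuous_const.add continuous_id)
    exact (c1.mul c2).mul q.continuous
  constructor
  · have h1 : Tendsto (fun t : ℝ => (1 - t) ^ c * (1 + t) ^ d * q.eval t)
        (nhdsWithin 1 (Set.Iio 1)) (nhds 0) := by
      have := hgc.continuousAt (x := 1).tendsto.mono_left (nhdsWithin_le_nhds (s := Set.Iio 1))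
      simpa [Real.zero_rpow hc.ne'] using this
    refine h1.congr' ?_
    exact (eventuallyEq_of_mem (Ioo_mem_nhdsLT_of_mem (by norm_num : (1:ℝ) ∈ Set.Ioc (-1:ℝ) 1)) hf).symm
  · have h1 : Tendsto (fun t : ℝ => (1 - t) ^ c * (1 + t) ^ d * q.eval t)
        (nhdsWithin (-1) (Set.Ioi (-1))) (nhds 0) := by
      have := hgc.continuousAt (x := -1).tendsto.mono_left (nhdsWithin_le_nhds (s := Set.Ioi (-1)))
      simpa [Real.zero_rpow hd.ne'] using this
    refine h1.congr' ?_
    exact (eventuallyEq_of_mem (Ioo_mem_nhdsGT_of_mem (by norm_num : (-1:ℝ) ∈ Set.Ico (-1:ℝ) 1)) hf).symm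

lemma integrable_one_sub_rpow {a : ℝ} (ha : -1 < a) :
    IntegrableOn (fun t : ℝ => (1 - t) ^ a) (Set.Ioo (-1:ℝ) 1) := by
  have base : IntervalIntegrable (fun x : ℝ => x ^ a) volume 0 2 := by
    rw [intervalIntegrable_iff_integrableOn_Ioo_of_le (by norm_num)]
    exact (intervalIntegral.integrableOn_Ioo_rpow_iff two_pos).2 ha
  have h := (base.comp_sub_left 1).symm
  -- h : IntervalIntegrable (fun x => (1 - x) ^ a) volume (1 - 2) (1 - 0)
  rw [show (1:ℝ) - 2 = -1 by norm_num, show (1:ℝ) - 0 = 1 by norm_num,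
    intervalIntegrable_iff_integrableOn_Ioo_of_le (by norm_num : (-1:ℝ) ≤ 1)] at h
  exact h

lemma integrable_one_add_rpow {b : ℝ} (hb : -1 < b) :
    IntegrableOn (fun t : ℝ => (1 + t) ^ b) (Set.Ioo (-1:ℝ) 1) := by
  have base : IntervalIntegrable (fun x : ℝ => x ^ b) volume 0 2 := by
    rw [intervalIntegrable_iff_integrableOn_Ioo_of_le (by norm_num)]
    exact (intervalIntegral.integrableOn_Ioo_rpow_iff two_pos).2 hb
  have h := base.comp_add_right 1
  -- h : IntervalIntegrable (fun x => (x + 1) ^ b) volume (0 - 1) (2 - 1)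
  rw [show (0:ℝ) - 1 = -1 by norm_num, show (2:ℝ) - 1 = 1 by norm_num,
    intervalIntegrable_iff_integrableOn_Ioo_of_le (by norm_num : (-1:ℝ) ≤ 1)] at h
  exact h.congr_fun (fun t _ => by rw [add_comm]) measurableSet_Ioo

lemma integrable_rpow_weight {a b : ℝ} (ha : -1 < a) (hb : -1 < b) (q : Polynomial ℝ) :
    IntegrableOn (fun t : ℝ => (1 - t) ^ a * (1 + t) ^ b * q.eval t) (Set.Ioo (-1:ℝ) 1) := by
  set f : ℝ → ℝ := fun t => (1 - t) ^ a * (1 + t) ^ b * q.eval t with hfdef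
  have hcont : ContinuousOn f (Set.Ioo (-1:ℝ) 1) := by
    apply ContinuousOn.mul
    apply ContinuousOn.mul
    · exact (continuous_const.sub continuous_id).continuousOn.rpow_const
        (fun x hx => Or.inl (by simp only [mem_Ioo] at hx; simp only [Pi.sub_apply, Pi.add_apply, id_eq]; intro h; linarith [hx.2]))
    · exact (continuous_const.add continuous_id).continuousOn.rpow_const
        (fun x hx => Or.inl (by simp only [mem_Ioo] at hx; simp only [Pi.sub_apply, Pi.add_apply, id_eq]; intro h; linarith [hx.1]))
    · exact q.continuous.continuousOn
  -- right half
  have hright : IntegrableOn f (Set.Ioo 0 1) := by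
    have hc2 : ContinuousOn (fun t : ℝ => (1 + t) ^ b * q.eval t) (Set.Icc (0:ℝ) 1) := by
      apply ContinuousOn.mul
      · exact (continuous_const.add continuous_id).continuousOn.rpow_const
          (fun x hx => Or.inl (by simp only [mem_Icc] at hx; simp only [Pi.sub_apply, Pi.add_apply, id_eq]; intro h; linarith [hx.1]))
      · exact q.continuous.continuousOn
    obtain ⟨M, hM⟩ := isCompact_Icc.exists_bound_of_continuousOn hc2
    refine Integrable.mono' (g := fun t => M * (1 - t) ^ a)
      (((integrable_one_sub_rpow ha).mono_set (Ioo_subset_Ioo (by norm_num) le_rfl)).const_mul M)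
      ((hcont.mono (Ioo_subset_Ioo (by norm_num) le_rfl)).aestronglyMeasurable measurableSet_Ioo) ?_
    filter_upwards [ae_restrict_mem measurableSet_Ioo] with x hx
    have h1 : (0:ℝ) < 1 - x := by simp only [mem_Ioo] at hx; linarith [hx.2]
    have hMx := hM x (Ioo_subset_Icc_self hx)
    have : ‖f x‖ = (1 - x) ^ a * ‖(1 + x) ^ b * q.eval x‖ := by
      rw [hfdef]; simp only [mul_assoc, norm_mul, Real.norm_eq_abs,
        abs_of_nonneg (Real.rpow_nonneg h1.le a)]
    rw [this]
    calc (1 - x) ^ a * ‖(1 + x) ^ b * q.eval x‖ ≤ (1 - x) ^ a * M := by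
          exact mul_le_mul_of_nonneg_left hMx (Real.rpow_nonneg h1.le a)
      _ = M * (1 - x) ^ a := mul_comm _ _
  -- left half
  have hleft : IntegrableOn f (Set.Ioo (-1:ℝ) 0) := by
    have hc2 : ContinuousOn (fun t : ℝ => (1 - t) ^ a * q.eval t) (Set.Icc (-1:ℝ) 0) := by
      apply ContinuousOn.mul
      · exact (continuous_const.sub continuous_id).continuousOn.rpow_const
          (fun x hx => Or.inl (by simp only [mem_Icc] at hx; simp only [Pi.sub_apply, Pi.add_apply, id_eq]; intro h; linarith [hx.2]))
      · exact q.continuous.continuousOn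
    obtain ⟨M, hM⟩ := isCompact_Icc.exists_bound_of_continuousOn hc2
    refine Integrable.mono' (g := fun t => M * (1 + t) ^ b)
      (((integrable_one_add_rpow hb).mono_set (Ioo_subset_Ioo le_rfl (by norm_num))).const_mul M)
      ((hcont.mono (Ioo_subset_Ioo le_rfl (by norm_num))).aestronglyMeasurable measurableSet_Ioo) ?_
    filter_upwards [ae_restrict_mem measurableSet_Ioo] with x hx
    have h1 : (0:ℝ) < 1 + x := by simp only [mem_Ioo] at hx; linarith [hx.1]
    have hMx := hM x (Ioo_subset_Icc_self hx)
    have : ‖f x‖ = (1 + x) ^ b * ‖(1 - x) ^ a * q.eval x‖ := by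
      show ‖(1 - x) ^ a * (1 + x) ^ b * q.eval x‖ = _
      rw [show (1 - x) ^ a * (1 + x) ^ b * q.eval x = (1 + x) ^ b * ((1 - x) ^ a * q.eval x) by ring]
      rw [norm_mul, Real.norm_eq_abs ((1 + x) ^ b), abs_of_nonneg (Real.rpow_nonneg h1.le b)]
    rw [this]
    calc (1 + x) ^ b * ‖(1 - x) ^ a * q.eval x‖ ≤ (1 + x) ^ b * M :=
          mul_le_mul_of_nonneg_left hMx (Real.rpow_nonneg h1.le b)
      _ = M * (1 + x) ^ b := mul_comm _ _
  have hleft' : IntegrableOn f (Set.Ioc (-1:ℝ) 0) :=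
    (integrableOn_Ioc_iff_integrableOn_Ioo).2 hleft
  have := hleft'.union hright
  rwa [Set.Ioc_union_Ioo_eq_Ioo (by norm_num : (-1:ℝ) ≤ 0) (by norm_num : (0:ℝ) < 1)] at this

lemma parts_Ioo {A B : ℝ} (hAB : A < B) {F F' : ℝ → ℝ}
    (hF : ∀ x ∈ Set.Ioo A B, HasDerivAt F (F' x) x)
    (hFi : IntegrableOn F' (Set.Ioo A B))
    (hA : Tendsto F (nhdsWithin A (Set.Ioi A)) (nhds 0))
    (hB : Tendsto F (nhdsWithin B (Set.Iio B)) (nhds 0)) :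
    ∫ x in Set.Ioo A B, F' x = 0 := by
  set δ : ℕ → ℝ := fun n => (B - A) / (n + 2) with hδdef
  have hd : 0 < B - A := sub_pos.2 hAB
  have hδpos : ∀ n : ℕ, 0 < δ n := fun n => div_pos hd (by positivity)
  have hδle : ∀ n : ℕ, δ n ≤ (B - A) / 2 := fun n =>
    div_le_div_of_nonneg_left hd.le two_pos (le_add_of_nonneg_left (Nat.cast_nonneg n))
  set a : ℕ → ℝ := fun n => A + δ n with hadef
  set b : ℕ → ℝ := fun n => B - δ n with hbdef
  have haA : ∀ n, A < a n := fun n => by simp only [hadef]; linarith [hδpos n]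
  have hbB : ∀ n, b n < B := fun n => by simp only [hbdef]; linarith [hδpos n]
  have hab : ∀ n, a n ≤ b n := fun n => by
    simp only [hadef, hbdef]; have := hδle n; linarith
  have hsub : ∀ n, Set.Icc (a n) (b n) ⊆ Set.Ioo A B := fun n x hx =>
    ⟨lt_of_lt_of_le (haA n) hx.1, lt_of_le_of_lt hx.2 (hbB n)⟩
  have hδ0 : Tendsto δ atTop (𝓝 0) := by
    apply Tendsto.div_atTop tendsto_const_nhds
    exact tendsto_atTop_add_const_right atTop 2 tendsto_natCast_atTop_atTop
  have hta : Tendsto a atTop (𝓝 A) := by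
    simpa using tendsto_const_nhds.add hδ0
  have htb : Tendsto b atTop (𝓝 B) := by
    simpa using tendsto_const_nhds.sub hδ0
  have hcover : AECover ((volume : Measure ℝ).restrict (Set.Ioo A B)) atTop
      (fun n => Set.Ioc (a n) (b n)) := aecover_Ioo_of_Ioc hta htb
  have hlim1 : Tendsto (fun n => ∫ x in (a n)..(b n), F' x) atTop
      (𝓝 (∫ x in Set.Ioo A B, F' x)) := by
    have h := hcover.integral_tendsto_of_countably_generated hFi
    refine h.congr fun n => ?_
    rw [intervalIntegral.integral_of_le (hab n),
      Measure.restrict_restrict measurableSet_Ioc,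
      inter_eq_left.2 ((Set.Ioc_subset_Icc_self).trans (hsub n))]
  have key : ∀ n, ∫ x in (a n)..(b n), F' x = F (b n) - F (a n) := by
    intro n
    apply intervalIntegral.integral_eq_sub_of_hasDerivAt
    · intro x hx
      rw [uIcc_of_le (hab n)] at hx
      exact hF x (hsub n hx)
    · rw [intervalIntegrable_iff_integrableOn_Ioc_of_le (hab n)]
      exact hFi.mono_set ((Set.Ioc_subset_Icc_self).trans (hsub n))
  have hlim2 : Tendsto (fun n => F (b n) - F (a n)) atTop (𝓝 0) := by
    have h1 : Tendsto (fun n => F (b n)) atTop (𝓝 0) := by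
      apply hB.comp
      refine tendsto_nhdsWithin_iff.2 ⟨htb, Eventually.of_forall fun n => hbB n⟩
    have h2 : Tendsto (fun n => F (a n)) atTop (𝓝 0) := by
      apply hA.comp
      refine tendsto_nhdsWithin_iff.2 ⟨hta, Eventually.of_forall fun n => haA n⟩
    simpa using h1.sub h2
  exact tendsto_nhds_unique (hlim1.congr key) hlim2

end QuasiOrthogonalityAux

open Set Filter Topology Polynomial in
/-- (Scalar quasi-orthogonality.) Let `α, β > −1`, let `k ≥ 1` and let `p ∈ ℝ[x]` have
degree strictly less than `k`. Then
`∫_{(−1,1)} p(x) · (dᵏ/dtᵏ)|_{t=x} [(1−t)^{k+α}(1+t)^{k+β}] dx = 0`,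
where the powers are real powers of the positive reals `1−t`, `1+t`. -/
theorem stmt_16 (α β : ℝ) (hα : -1 < α) (hβ : -1 < β) (k : ℕ) (hk : 1 ≤ k)
    (p : Polynomial ℝ) (hp : p.degree < (k : WithBot ℕ)) :
    ∫ x in Set.Ioo (-1 : ℝ) 1,
        p.eval x *
          iteratedDeriv k (fun t : ℝ => (1 - t) ^ ((k : ℝ) + α) * (1 + t) ^ ((k : ℝ) + β)) x
      = 0 := by
  set w : ℝ → ℝ := fun t : ℝ => (1 - t) ^ ((k : ℝ) + α) * (1 + t) ^ ((k : ℝ) + β) with hw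
  -- integrability of polynomial × m-th derivative of the weight
  have hterm : ∀ m : ℕ, m ≤ k → ∀ r : Polynomial ℝ,
      IntegrableOn (fun t => r.eval t * iteratedDeriv m w t) (Set.Ioo (-1:ℝ) 1) := by
    intro m hm r
    obtain ⟨q, hq⟩ := iter_formula α β k m
    rw [← hw] at hq
    have hmk : (m:ℝ) ≤ k := Nat.cast_le.2 hm
    have ha' : -1 < (k:ℝ) + α - m := by linarith
    have hb' : -1 < (k:ℝ) + β - m := by linarith
    refine (integrable_rpow_weight ha' hb' (r * q)).congr_fun ?_ measurableSet_Ioo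
    intro t ht
    beta_reduce
    rw [hq t ht, eval_mul]
    ring
  -- derivative of the m-th derivative inside the interval
  have hD : ∀ m : ℕ, ∀ t ∈ Set.Ioo (-1:ℝ) 1,
      HasDerivAt (iteratedDeriv m w) (iteratedDeriv (m+1) w t) t := by
    intro m t ht
    obtain ⟨q, hq⟩ := iter_formula α β k m
    rw [← hw] at hq
    obtain ⟨q', hq'⟩ := rpow_step _ _ q hq
    have h1 := hq' t ht
    rw [iteratedDeriv_succ, h1.deriv]
    exact h1
  -- boundary vanishing for m < k
  have hbound : ∀ m : ℕ, m < k →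
      Tendsto (iteratedDeriv m w) (nhdsWithin 1 (Set.Iio 1)) (nhds 0)
        ∧ Tendsto (iteratedDeriv m w) (nhdsWithin (-1) (Set.Ioi (-1))) (nhds 0) := by
    intro m hm
    obtain ⟨q, hq⟩ := iter_formula α β k m
    rw [← hw] at hq
    have hm' : (m:ℝ) + 1 ≤ k := by exact_mod_cast hm
    have hc : 0 < (k:ℝ) + α - m := by linarith
    have hd : 0 < (k:ℝ) + β - m := by linarith
    exact tendsto_zero_boundary hc hd q hq
  set I : ℕ → ℝ := fun j =>
    ∫ x in Set.Ioo (-1:ℝ) 1, (derivative^[j] p).eval x * iteratedDeriv (k - j) w x with hI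
  have hstep : ∀ j, j < k → I j = - I (j+1) := by
    intro j hj
    have hm : k - (j+1) < k := by omega
    have hkj : k - j = (k - (j+1)) + 1 := by omega
    set m := k - (j + 1) with hmdef
    have hF : ∀ x ∈ Set.Ioo (-1:ℝ) 1,
        HasDerivAt (fun x => (derivative^[j] p).eval x * iteratedDeriv m w x)
          ((derivative^[j+1] p).eval x * iteratedDeriv m w x
            + (derivative^[j] p).eval x * iteratedDeriv (m+1) w x) x := by
      intro x hx
      have h1 := (derivative^[j] p).hasDerivAt x
      have h2 := hD m x hx
      have h3 := h1.mul h2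
      rw [Function.iterate_succ_apply']
      exact h3
    have hFi : IntegrableOn
        (fun x => (derivative^[j+1] p).eval x * iteratedDeriv m w x
          + (derivative^[j] p).eval x * iteratedDeriv (m+1) w x) (Set.Ioo (-1:ℝ) 1) :=
      (hterm m hm.le _).add (hterm (m+1) (by omega) _)
    have hBnd := hbound m hm
    have hcont1 : Tendsto (fun x : ℝ => (derivative^[j] p).eval x) (nhdsWithin 1 (Set.Iio 1))
        (nhds ((derivative^[j] p).eval 1)) :=
      ((derivative^[j] p).continuous.continuousAt).tendsto.mono_left nhdsWithin_le_nhds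
    have hcont2 : Tendsto (fun x : ℝ => (derivative^[j] p).eval x)
        (nhdsWithin (-1) (Set.Ioi (-1))) (nhds ((derivative^[j] p).eval (-1))) :=
      ((derivative^[j] p).continuous.continuousAt).tendsto.mono_left nhdsWithin_le_nhds
    have hB1 : Tendsto (fun x => (derivative^[j] p).eval x * iteratedDeriv m w x)
        (nhdsWithin 1 (Set.Iio 1)) (nhds 0) := by
      simpa using hcont1.mul hBnd.1
    have hB2 : Tendsto (fun x => (derivative^[j] p).eval x * iteratedDeriv m w x)
        (nhdsWithin (-1) (Set.Ioi (-1))) (nhds 0) := by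
      simpa using hcont2.mul hBnd.2
    have h0 := parts_Ioo (by norm_num : (-1:ℝ) < 1) hF hFi hB2 hB1
    rw [integral_add (hterm m hm.le _) (hterm (m+1) (by omega) _)] at h0
    have e1 : I (j+1) = ∫ x in Set.Ioo (-1:ℝ) 1,
        (derivative^[j+1] p).eval x * iteratedDeriv m w x := by
      simp only [hI, ← hmdef]
    have e2 : I j = ∫ x in Set.Ioo (-1:ℝ) 1,
        (derivative^[j] p).eval x * iteratedDeriv (m+1) w x := by
      simp only [hI]; rw [hkj]
    rw [e2, e1]
    linarith [h0]
  have hiter : ∀ j, j ≤ k → I 0 = (-1:ℝ)^j * I j := by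
    intro j
    induction j with
    | zero => simp
    | succ n ih =>
      intro h
      have hn := ih (by omega)
      rw [hstep n (by omega)] at hn
      rw [hn, pow_succ]
      ring
  have hnd : p.natDegree < k := by
    rcases eq_or_ne p 0 with h | h
    · simp only [h, natDegree_zero]; omega
    · exact (Polynomial.natDegree_lt_iff_degree_lt h).2 hp
  have hIk : I k = 0 := by
    rw [hI]
    simp [Polynomial.iterate_derivative_eq_zero hnd]
  have := hiter k le_rfl
  rw [hIk, mul_zero] at this
  simpa [hI] using this
end
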